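/- For all ρ ≥ 0 and u ∈ ℝ, the first moment of the Maxwellian satisfies ∫_ℝ ξ M(ρ,u,ξ) dξ = (ρu, ρu² + κ ρ^γ), i.e., it equals the flux F(ρ,u) of the isentropic gas equations. -/

import Mathlib

open MeasureTheory Real Set

noncomputable section

/-- J_λ = ∫_{-1}^1 (1-z²)^λ dz -/
def Jl (l : ℝ) : ℝ := ∫ z in (-1:ℝ)..1, (1 - z^2) ^ l

/-- θ = (γ-1)/2 -/
def th (γ : ℝ) : ℝ := (γ - 1) / 2

/-- λ = 1/(γ-1) - 1/2 -/
def lam (γ : ℝ) : ℝ := 1 / (γ - 1) - 1 / 2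

/-- a_γ = 2√(γκ)/(γ-1) -/
def ag (γ κ : ℝ) : ℝ := 2 * Real.sqrt (γ * κ) / (γ - 1)

/-- c_{γ,κ} = a_γ^{-2/(γ-1)} / J_λ -/
def cgk (γ κ : ℝ) : ℝ := ag γ κ ^ (-(2 / (γ - 1))) / Jl (lam γ)

/-- χ(ρ,ξ) = c_{γ,κ} (a_γ² ρ^{γ-1} - ξ²)_+^λ -/
def chi (γ κ ρ ξ : ℝ) : ℝ :=
  cgk γ κ * (max (ag γ κ ^ 2 * ρ ^ (γ - 1) - ξ ^ 2) 0) ^ lam γ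

/-- vector-valued Maxwellian -/
def Mx (γ κ ρ u ξ : ℝ) : ℝ × ℝ :=
  (chi γ κ ρ (ξ - u), ((1 - th γ) * u + th γ * ξ) * chi γ κ ρ (ξ - u))

/-- domain D = {f₀ > 0} ∪ {0} -/
def Dset : Set (ℝ × ℝ) := {f | 0 < f.1 ∨ f = 0}

/-- kinetic energy H(f,ξ) -/
def Hk (γ κ : ℝ) (f : ℝ × ℝ) (ξ : ℝ) : ℝ :=
  if f = 0 then 0 else
    th γ / (1 - th γ) * (ξ ^ 2 / 2) * f.1
      + th γ / (2 * cgk γ κ ^ (1 / lam γ)) * (f.1 ^ (1 + 1 / lam γ) / (1 + 1 / lam γ))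
      + 1 / (1 - th γ) * (1 / 2) * (f.2 ^ 2 / f.1)
      - th γ / (1 - th γ) * ξ * f.2

/-- u(f,ξ), inverse relation to f = M(ρ,u,ξ) -/
def uf (γ : ℝ) (f : ℝ × ℝ) (ξ : ℝ) : ℝ := (f.2 / f.1 - th γ * ξ) / (1 - th γ)

/-- ρ(f,ξ), inverse relation to f = M(ρ,u,ξ) -/
def rf (γ κ : ℝ) (f : ℝ × ℝ) (ξ : ℝ) : ℝ :=
  ag γ κ ^ (-(2 / (γ - 1))) *
    (((f.2 / f.1 - ξ) / (1 - th γ)) ^ 2 + (f.1 / cgk γ κ) ^ (1 / lam γ)) ^ (1 / (γ - 1))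

/-- kinetic Riemann invariant ω₁(f,ξ) -/
def om1 (γ κ : ℝ) (f : ℝ × ℝ) (ξ : ℝ) : ℝ :=
  uf γ f ξ - ag γ κ * rf γ κ f ξ ^ th γ

/-- kinetic Riemann invariant ω₂(f,ξ) -/
def om2 (γ κ : ℝ) (f : ℝ × ℝ) (ξ : ℝ) : ℝ :=
  uf γ f ξ + ag γ κ * rf γ κ f ξ ^ th γ

/-- Υ_{l}(z) = ∫_1^z (y²-1)^l dy -/
def Ups (l z : ℝ) : ℝ := ∫ y in (1:ℝ)..z, (y ^ 2 - 1) ^ l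

/-- entropy kernel Φ(ρ,u,ξ,v) -/
def Phi (γ κ ρ u ξ v : ℝ) : ℝ :=
  let w1 := u - ag γ κ * ρ ^ th γ
  let w2 := u + ag γ κ * ρ ^ th γ
  if w1 < ξ ∧ ξ < w2 ∧ w1 < v ∧ v < w2 then
    (1 - th γ) ^ 2 / th γ * (cgk γ κ / Jl (lam γ)) * |ξ - v| ^ (2 * lam γ - 1) *
      Ups (lam γ - 1) (((ξ + v) * (w1 + w2) - 2 * (w1 * w2 + ξ * v)) / ((w2 - w1) * |ξ - v|))
  else 0

/-- kinetic entropy H_S(f,ξ) -/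
def HS (γ κ : ℝ) (S : ℝ → ℝ) (f : ℝ × ℝ) (ξ : ℝ) : ℝ :=
  if f = 0 then 0 else ∫ v : ℝ, Phi γ κ (rf γ κ f ξ) (uf γ f ξ) ξ v * S v

/-- kinetic invariant domain D̃_ξ -/
def Dtil (γ κ ωmin ωmax ξ : ℝ) : Set (ℝ × ℝ) :=
  {f | f ∈ Dset ∧ (f = 0 ∨
    (ωmin ≤ om1 γ κ f ξ ∧ om1 γ κ f ξ ≤ om2 γ κ f ξ ∧ om2 γ κ f ξ ≤ ωmax))}

/-- T_S(ρ,u) (subdifferential of η_S) -/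
def TS (γ κ : ℝ) (S : ℝ → ℝ) (ρ u : ℝ) : ℝ × ℝ :=
  ((1 / Jl (lam γ)) * ∫ z in (-1:ℝ)..1, (1 - z ^ 2) ^ lam γ *
      (S (u + ag γ κ * ρ ^ th γ * z)
        + (th γ * ag γ κ * ρ ^ th γ * z - u) * deriv S (u + ag γ κ * ρ ^ th γ * z)),
   (1 / Jl (lam γ)) * ∫ z in (-1:ℝ)..1, (1 - z ^ 2) ^ lam γ *
      deriv S (u + ag γ κ * ρ ^ th γ * z))

/-- inner product on ℝ² -/
def dot (a b : ℝ × ℝ) : ℝ := a.1 * b.1 + a.2 * b.2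


/-! The substitution `ξ = u + a_γ ρ^θ z` turns the moments of `χ(ρ, · - u)` into `ρ / J_λ` times
moments of the weight `(1 - z²)^λ` on `[-1, 1]`. The odd moment of the weight vanishes by symmetry,
and integration by parts gives `(2λ + 3) ∫ z² (1 - z²)^λ = J_λ`; since `θ a_γ² = (2λ + 3) κ`, the
second moment of the Maxwellian produces exactly the pressure `κ ρ^γ`. -/

section Weight

variable {l : ℝ}

theorem continuous_one_sub_sq_rpow (hl : 0 ≤ l) : Continuous fun z : ℝ => (1 - z ^ 2) ^ l :=
  (Real.continuous_rpow_const hl).comp (by fun_prop)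

theorem Jl_pos (hl : 0 ≤ l) : 0 < Jl l :=
  intervalIntegral.intervalIntegral_pos_of_pos_on
    ((continuous_one_sub_sq_rpow hl).intervalIntegrable _ _)
    (fun _ hz => Real.rpow_pos_of_pos (by nlinarith [hz.1, hz.2]) l) (by norm_num)

theorem integral_mul_one_sub_sq_rpow (l : ℝ) : ∫ z in (-1 : ℝ)..1, z * (1 - z ^ 2) ^ l = 0 := by
  have h := intervalIntegral.integral_comp_neg (a := -1) (b := 1)
    fun z : ℝ => z * (1 - z ^ 2) ^ l
  simp only [neg_neg, neg_sq, neg_mul, intervalIntegral.integral_neg] at h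
  linarith

theorem integral_sq_mul_one_sub_sq_rpow (hl : 0 ≤ l) :
    (2 * l + 3) * ∫ z in (-1 : ℝ)..1, z ^ 2 * (1 - z ^ 2) ^ l = Jl l := by
  have hJ : IntervalIntegrable (fun z : ℝ => (1 - z ^ 2) ^ l) volume (-1) 1 :=
    (continuous_one_sub_sq_rpow hl).intervalIntegrable _ _
  have hK : IntervalIntegrable (fun z : ℝ => z ^ 2 * (1 - z ^ 2) ^ l) volume (-1) 1 :=
    ((continuous_pow 2).mul (continuous_one_sub_sq_rpow hl)).intervalIntegrable _ _
  have hderiv (z : ℝ) (hz : z ∈ uIcc (-1 : ℝ) 1) :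
      HasDerivAt (fun z : ℝ => z * (1 - z ^ 2) ^ (l + 1))
        ((1 - z ^ 2) ^ l - (2 * l + 3) * (z ^ 2 * (1 - z ^ 2) ^ l)) z := by
    rw [uIcc_of_le (by norm_num)] at hz
    have hpow := (Real.hasDerivAt_rpow_const (x := 1 - z ^ 2) (p := l + 1)
      (Or.inr (by linarith))).comp z ((hasDerivAt_pow 2 z).const_sub 1)
    refine ((hasDerivAt_id z).mul hpow).congr_deriv ?_
    simp only [Function.comp_apply, id, add_sub_cancel_right]
    rw [Real.rpow_add' (by nlinarith [hz.1, hz.2]) (by linarith), Real.rpow_one]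
    push_cast
    ring
  have hFTC := intervalIntegral.integral_eq_sub_of_hasDerivAt hderiv (hJ.sub (hK.const_mul _))
  rw [intervalIntegral.integral_sub hJ (hK.const_mul _),
    intervalIntegral.integral_const_mul] at hFTC
  norm_num [Real.zero_rpow (by linarith : l + 1 ≠ 0)] at hFTC
  rw [Jl]; linarith

theorem integral_quadratic_mul_one_sub_sq_rpow (hl : 0 ≤ l) (p q r : ℝ) :
    ∫ z in (-1 : ℝ)..1, (p + q * z + r * z ^ 2) * (1 - z ^ 2) ^ l
      = (p + r / (2 * l + 3)) * Jl l := by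
  have hw := continuous_one_sub_sq_rpow hl
  have hJ : IntervalIntegrable (fun z : ℝ => p * (1 - z ^ 2) ^ l) volume (-1) 1 :=
    (continuous_const.mul hw).intervalIntegrable _ _
  have hL : IntervalIntegrable (fun z : ℝ => q * (z * (1 - z ^ 2) ^ l)) volume (-1) 1 :=
    (continuous_const.mul (continuous_id.mul hw)).intervalIntegrable _ _
  have hK : IntervalIntegrable (fun z : ℝ => r * (z ^ 2 * (1 - z ^ 2) ^ l)) volume (-1) 1 :=
    (continuous_const.mul ((continuous_pow 2).mul hw)).intervalIntegrable _ _
  have hK' := integral_sq_mul_one_sub_sq_rpow hl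
  have hpos : 0 < 2 * l + 3 := by linarith
  simp only [add_mul, mul_assoc]
  rw [intervalIntegral.integral_add (hJ.add hL) hK, intervalIntegral.integral_add hJ hL]
  simp only [intervalIntegral.integral_const_mul, integral_mul_one_sub_sq_rpow]
  unfold Jl at hK' ⊢
  rw [← hK']
  field_simp
  ring

theorem integral_mul_max_sub_sq_rpow {b : ℝ} (hl : l ≠ 0) (hb : 0 < b) (P : ℝ → ℝ) (u : ℝ) :
    ∫ ξ, P ξ * max (b ^ 2 - (ξ - u) ^ 2) 0 ^ l
      = b ^ (2 * l + 1) * ∫ z in (-1 : ℝ)..1, P (u + b * z) * (1 - z ^ 2) ^ l := by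
  have hsupp (ξ : ℝ) (hξ : ξ ∉ Icc (u - b) (u + b)) :
      P ξ * max (b ^ 2 - (ξ - u) ^ 2) 0 ^ l = 0 := by
    have : b ^ 2 < (ξ - u) ^ 2 := by
      rw [mem_Icc, not_and_or] at hξ
      rcases hξ with h | h <;> push Not at h <;> nlinarith
    rw [max_eq_right (by linarith), Real.zero_rpow hl, mul_zero]
  have hscale (z : ℝ) (hz : z ∈ uIcc (-1 : ℝ) 1) :
      P (u + b * z) * max (b ^ 2 - (u + b * z - u) ^ 2) 0 ^ l
        = (b ^ 2) ^ l * (P (u + b * z) * (1 - z ^ 2) ^ l) := by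
    rw [uIcc_of_le (by norm_num)] at hz
    have h0 : 0 ≤ 1 - z ^ 2 := by nlinarith [hz.1, hz.2]
    rw [show b ^ 2 - (u + b * z - u) ^ 2 = b ^ 2 * (1 - z ^ 2) by ring,
      max_eq_left (by positivity), Real.mul_rpow (by positivity) h0]
    ring
  have hpow : b * (b ^ 2) ^ l = b ^ (2 * l + 1) := by
    rw [← Real.rpow_natCast, ← Real.rpow_mul hb.le, Real.rpow_add hb, Real.rpow_one]
    push_cast
    ring
  have hsub := intervalIntegral.smul_integral_comp_add_mul (a := -1) (b := 1)
    (fun ξ => P ξ * max (b ^ 2 - (ξ - u) ^ 2) 0 ^ l) b u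
  simp only [mul_neg, mul_one, ← sub_eq_add_neg] at hsub
  rw [← setIntegral_eq_integral_of_forall_compl_eq_zero hsupp, integral_Icc_eq_integral_Ioc,
    ← intervalIntegral.integral_of_le (by linarith), ← hsub,
    intervalIntegral.integral_congr hscale, intervalIntegral.integral_const_mul, smul_eq_mul,
    ← mul_assoc, hpow]

end Weight

section Maxwellian

variable {γ κ : ℝ}

theorem lam_pos (hγ : 1 < γ) (hγ' : γ < 3) : 0 < lam γ := by
  have : 1 / 2 < 1 / (γ - 1) := one_div_lt_one_div_of_lt (by linarith) (by linarith)
  unfold lam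
  linarith

theorem ag_pos (hκ : 0 < κ) (hγ : 1 < γ) : 0 < ag γ κ :=
  div_pos (by have := mul_pos (by linarith : 0 < γ) hκ; positivity) (by linarith)

theorem th_mul_ag_sq (hγκ : 0 ≤ γ * κ) (hγ : γ ≠ 1) : th γ * ag γ κ ^ 2 = (2 * lam γ + 3) * κ := by
  have h : γ - 1 ≠ 0 := sub_ne_zero.2 hγ
  unfold th ag lam
  rw [div_pow, mul_pow, Real.sq_sqrt hγκ]
  field_simp
  ring

theorem rpow_th_sq {ρ : ℝ} (hρ : 0 ≤ ρ) : (ρ ^ th γ) ^ 2 = ρ ^ (γ - 1) := by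
  rw [← Real.rpow_natCast, ← Real.rpow_mul hρ, th]
  norm_num

theorem chi_eq_of_nonneg {ρ : ℝ} (hρ : 0 ≤ ρ) (ξ : ℝ) :
    chi γ κ ρ ξ = cgk γ κ * max ((ag γ κ * ρ ^ th γ) ^ 2 - ξ ^ 2) 0 ^ lam γ := by
  rw [chi, mul_pow, rpow_th_sq hρ]

theorem chi_zero_density (hγ : γ ≠ 1) (hl : lam γ ≠ 0) (ξ : ℝ) : chi γ κ 0 ξ = 0 := by
  rw [chi, Real.zero_rpow (sub_ne_zero.2 hγ), mul_zero, zero_sub,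
    max_eq_right (neg_nonpos.2 (sq_nonneg ξ)), Real.zero_rpow hl, mul_zero]

/-- The normalisation `c_{γ,κ}` makes `χ(ρ, ·)` have total mass `ρ`. -/
theorem cgk_mul_rpow_mul_Jl (hκ : 0 < κ) (hγ : 1 < γ) (hγ' : γ < 3) {ρ : ℝ} (hρ : 0 ≤ ρ) :
    cgk γ κ * (ag γ κ * ρ ^ th γ) ^ (2 * lam γ + 1) * Jl (lam γ) = ρ := by
  have ha := ag_pos hκ hγ
  have hJ := (Jl_pos (lam_pos hγ hγ').le).ne'
  have h1 : γ - 1 ≠ 0 := by linarith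
  have hexp : 2 * lam γ + 1 = 2 / (γ - 1) := by unfold lam; field_simp; ring
  have hth : th γ * (2 / (γ - 1)) = 1 := by unfold th; field_simp
  rw [Real.mul_rpow ha.le (Real.rpow_nonneg hρ _), hexp, ← Real.rpow_mul hρ, hth,
    Real.rpow_one, cgk, Real.rpow_neg ha.le]
  have := (Real.rpow_pos_of_pos ha (2 / (γ - 1))).ne'
  field_simp

theorem integral_mul_chi (hκ : 0 < κ) (hγ : 1 < γ) (hγ' : γ < 3) {ρ : ℝ} (hρ : 0 < ρ)
    (P : ℝ → ℝ) (u : ℝ) :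
    ∫ ξ, P ξ * chi γ κ ρ (ξ - u)
      = ρ * (∫ z in (-1 : ℝ)..1, P (u + ag γ κ * ρ ^ th γ * z) * (1 - z ^ 2) ^ lam γ)
          / Jl (lam γ) := by
  have hb : 0 < ag γ κ * ρ ^ th γ := mul_pos (ag_pos hκ hγ) (Real.rpow_pos_of_pos hρ _)
  have hl := lam_pos hγ hγ'
  have hJ := (Jl_pos hl.le).ne'
  simp only [chi_eq_of_nonneg hρ.le, mul_left_comm (P _)]
  rw [integral_const_mul, integral_mul_max_sub_sq_rpow hl.ne' hb, eq_div_iff hJ]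
  linear_combination (∫ z in (-1 : ℝ)..1, P (u + ag γ κ * ρ ^ th γ * z) * (1 - z ^ 2) ^ lam γ) *
    cgk_mul_rpow_mul_Jl hκ hγ hγ' hρ.le

end Maxwellian

theorem stmt2 (γ κ : ℝ) (hκ : 0 < κ) (hγ : 1 < γ) (hγ' : γ < 3)
    (ρ u : ℝ) (hρ : 0 ≤ ρ) :
    (∫ ξ : ℝ, ξ * (Mx γ κ ρ u ξ).1) = ρ * u ∧
    (∫ ξ : ℝ, ξ * (Mx γ κ ρ u ξ).2) = ρ * u ^ 2 + κ * ρ ^ γ := by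
  have hl := lam_pos hγ hγ'
  rcases hρ.eq_or_lt with rfl | hρ
  · simp [Mx, chi_zero_density hγ.ne' hl.ne', Real.zero_rpow (by linarith : γ ≠ 0)]
  have hJ := (Jl_pos hl.le).ne'
  set b := ag γ κ * ρ ^ th γ with hb
  have hflux : th γ * b ^ 2 / (2 * lam γ + 3) = κ * ρ ^ γ / ρ := by
    rw [hb, mul_pow, ← mul_assoc, th_mul_ag_sq (by positivity) hγ.ne', rpow_th_sq hρ.le,
      Real.rpow_sub_one hρ.ne']
    field_simp
  constructor
  · have h := integral_quadratic_mul_one_sub_sq_rpow hl.le u b 0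
    simp only [zero_mul, add_zero, zero_div] at h
    simp only [Mx]
    rw [integral_mul_chi hκ hγ hγ' hρ, h]
    field_simp
  · have h : ∫ z in (-1 : ℝ)..1, (u + b * z) * ((1 - th γ) * u + th γ * (u + b * z)) *
        (1 - z ^ 2) ^ lam γ = (u ^ 2 + th γ * b ^ 2 / (2 * lam γ + 3)) * Jl (lam γ) := by
      rw [← integral_quadratic_mul_one_sub_sq_rpow hl.le _ ((1 + th γ) * u * b)]
      congr 1 with z
      ring
    simp only [Mx, ← mul_assoc]
    rw [integral_mul_chi hκ hγ hγ' hρ, h, hflux]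
    field_simp
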